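/- Let P be a real symmetric positive definite n×n matrix, η ∈ (0,1], and M a real n×n matrix with Mᵀ P M ⪯ (1−η) P. Then for every integer k ≥ 0, ‖M^k‖₂ ≤ √(λ_max(P)/λ_min(P)) · (1−η)^{k/2}, where λ_max(P) and λ_min(P) are the largest and smallest eigenvalues of P. -/

import Mathlib

open Matrix MeasureTheory ProbabilityTheory Filter

/-- Frobenius norm of a real matrix. -/
noncomputable def frob {α β : Type*} [Fintype α] [Fintype β] (A : Matrix α β ℝ) : ℝ :=
  Real.sqrt (∑ i, ∑ j, (A i j) ^ 2)

/-- Spectral norm (largest singular value) of a real matrix. -/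
noncomputable def spec {α β : Type*} [Fintype α] [Fintype β] [DecidableEq β]
    (A : Matrix α β ℝ) : ℝ :=
  ‖LinearMap.toContinuousLinearMap (Matrix.toEuclideanLin A)‖

/-- The positive semidefinite square root of a positive semidefinite real matrix
(junk value `0` if the matrix is not positive semidefinite). -/
noncomputable def msqrt {α : Type*} [Fintype α] [DecidableEq α]
    (M : Matrix α α ℝ) : Matrix α α ℝ :=
  open scoped Classical in
  if h : M.PosSemidef then
    h.1.eigenvectorUnitary.1 * diagonal ((↑) ∘ (Real.sqrt ∘ h.1.eigenvalues)) *
      (star h.1.eigenvectorUnitary : Matrix α α ℝ)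
  else 0

/-- Euclidean norm of a real vector. -/
noncomputable def vnorm {α : Type*} [Fintype α] (v : α → ℝ) : ℝ :=
  Real.sqrt (∑ i, (v i) ^ 2)

/-!
Write `‖x‖_P² = xᵀ P x`. The Lyapunov inequality `Mᵀ P M ⪯ (1 - η) P` says that `M` contracts
`‖·‖_P²` by the factor `1 - η`, hence `M ^ k` contracts it by `(1 - η) ^ k`. Since
`λ_min(P) ‖x‖² ≤ ‖x‖_P² ≤ λ_max(P) ‖x‖²`, passing from the Euclidean norm to `‖·‖_P` and back
costs at most the factor `λ_max(P) / λ_min(P)` on squared norms.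
-/

open scoped MatrixOrder

theorem EuclideanSpace.real_norm_sq_eq_dotProduct {ι : Type*} [Fintype ι]
    (x : EuclideanSpace ℝ ι) : ‖x‖ ^ 2 = x.ofLp ⬝ᵥ x.ofLp := by
  rw [EuclideanSpace.real_norm_sq_eq]
  simp only [dotProduct, sq]

theorem spec_le_of_dotProduct_le {κ ι : Type*} [Fintype κ] [Fintype ι] [DecidableEq ι]
    {A : Matrix κ ι ℝ} {c : ℝ} (hc : 0 ≤ c)
    (h : ∀ x, A *ᵥ x ⬝ᵥ A *ᵥ x ≤ c ^ 2 * (x ⬝ᵥ x)) : spec A ≤ c := by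
  refine ContinuousLinearMap.opNorm_le_bound _ hc fun x => ?_
  rw [← pow_le_pow_iff_left₀ (norm_nonneg _) (by positivity) two_ne_zero, mul_pow,
    EuclideanSpace.real_norm_sq_eq_dotProduct, EuclideanSpace.real_norm_sq_eq_dotProduct]
  exact h x.ofLp

namespace Matrix

variable {ι : Type*} [Fintype ι]

theorem PosSemidef.mulVec_dotProduct_mulVec_le {P M : Matrix ι ι ℝ} {c : ℝ}
    (h : (c • P - Mᵀ * P * M).PosSemidef) (x : ι → ℝ) :
    M *ᵥ x ⬝ᵥ P *ᵥ (M *ᵥ x) ≤ c * (x ⬝ᵥ P *ᵥ x) := by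
  have hx := h.dotProduct_mulVec_nonneg x
  rw [star_trivial, sub_mulVec, dotProduct_sub, smul_mulVec, dotProduct_smul, smul_eq_mul,
    ← mulVec_mulVec, ← mulVec_mulVec, dotProduct_transpose_mulVec, dotProduct_comm (P *ᵥ _)] at hx
  linarith

variable [DecidableEq ι]

theorem PosSemidef.pow_mulVec_dotProduct_pow_mulVec_le {P M : Matrix ι ι ℝ} {c : ℝ}
    (h : (c • P - Mᵀ * P * M).PosSemidef) (hc : 0 ≤ c) (k : ℕ) (x : ι → ℝ) :
    M ^ k *ᵥ x ⬝ᵥ P *ᵥ (M ^ k *ᵥ x) ≤ c ^ k * (x ⬝ᵥ P *ᵥ x) := by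
  induction k with
  | zero => simp
  | succ k ih =>
    rw [pow_succ', ← mulVec_mulVec, pow_succ', mul_assoc]
    exact (h.mulVec_dotProduct_mulVec_le _).trans (mul_le_mul_of_nonneg_left ih hc)

variable {A : Matrix ι ι ℝ}

theorem IsHermitian.iInf_eigenvalues_mul_dotProduct_le (hA : A.IsHermitian) (x : ι → ℝ) :
    (⨅ i, hA.eigenvalues i) * (x ⬝ᵥ x) ≤ x ⬝ᵥ A *ᵥ x := by
  have hle : algebraMap ℝ (Matrix ι ι ℝ) (⨅ i, hA.eigenvalues i) ≤ A := by
    refine algebraMap_le_of_le_spectrum (fun r hr => ?_) hA.isSelfAdjoint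
    rw [hA.spectrum_real_eq_range_eigenvalues] at hr
    obtain ⟨i, rfl⟩ := hr
    exact ciInf_le (Set.finite_range _).bddBelow i
  simpa [sub_mulVec, Algebra.algebraMap_eq_smul_one, smul_mulVec, dotProduct_sub]
    using (le_iff.mp hle).dotProduct_mulVec_nonneg x

theorem IsHermitian.dotProduct_mulVec_le_iSup_eigenvalues_mul (hA : A.IsHermitian)
    (x : ι → ℝ) : x ⬝ᵥ A *ᵥ x ≤ (⨆ i, hA.eigenvalues i) * (x ⬝ᵥ x) := by
  have hle : A ≤ algebraMap ℝ (Matrix ι ι ℝ) (⨆ i, hA.eigenvalues i) := by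
    refine le_algebraMap_of_spectrum_le (fun r hr => ?_) hA.isSelfAdjoint
    rw [hA.spectrum_real_eq_range_eigenvalues] at hr
    obtain ⟨i, rfl⟩ := hr
    exact le_ciSup (Set.finite_range _).bddAbove i
  simpa [sub_mulVec, Algebra.algebraMap_eq_smul_one, smul_mulVec, dotProduct_sub]
    using (le_iff.mp hle).dotProduct_mulVec_nonneg x

/-- For empty `ι` both sides vanish (the infimum is the junk value `0`). -/
theorem PosDef.dotProduct_le_inv_iInf_eigenvalues_mul (hA : A.PosDef) (x : ι → ℝ) :
    x ⬝ᵥ x ≤ (⨅ i, hA.isHermitian.eigenvalues i)⁻¹ * (x ⬝ᵥ A *ᵥ x) := by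
  rcases isEmpty_or_nonempty ι with hι | hι
  · simp [dotProduct]
  obtain ⟨i, hi⟩ := exists_eq_ciInf_of_finite (f := hA.isHermitian.eigenvalues)
  have hpos : 0 < ⨅ i, hA.isHermitian.eigenvalues i := hi ▸ hA.eigenvalues_pos i
  rw [le_inv_mul_iff₀ hpos]
  exact hA.isHermitian.iInf_eigenvalues_mul_dotProduct_le x

end Matrix

theorem lyapunov_decay_bound_general {n : ℕ} (P M : Matrix (Fin n) (Fin n) ℝ) (η : ℝ)
    (hP : P.PosDef) (hη1 : η ≤ 1)
    (hM : ((1 - η) • P - Mᵀ * P * M).PosSemidef) :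
    ∀ k : ℕ, spec (M ^ k) ≤
      Real.sqrt ((⨆ i, hP.isHermitian.eigenvalues i) / (⨅ i, hP.isHermitian.eigenvalues i)) *
        Real.sqrt (1 - η) ^ k := by
  intro k
  set lo := ⨅ i, hP.isHermitian.eigenvalues i
  set hi := ⨆ i, hP.isHermitian.eigenvalues i
  have hlo : 0 ≤ lo := Real.iInf_nonneg fun i => (hP.eigenvalues_pos i).le
  have hhi : 0 ≤ hi := Real.iSup_nonneg fun i => (hP.eigenvalues_pos i).le
  have h1η : 0 ≤ 1 - η := by linarith
  refine spec_le_of_dotProduct_le (by positivity) fun x => ?_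
  calc M ^ k *ᵥ x ⬝ᵥ M ^ k *ᵥ x ≤ lo⁻¹ * (M ^ k *ᵥ x ⬝ᵥ P *ᵥ (M ^ k *ᵥ x)) :=
        hP.dotProduct_le_inv_iInf_eigenvalues_mul _
    _ ≤ lo⁻¹ * ((1 - η) ^ k * (x ⬝ᵥ P *ᵥ x)) := by
        gcongr; exact hM.pow_mulVec_dotProduct_pow_mulVec_le h1η k x
    _ ≤ lo⁻¹ * ((1 - η) ^ k * (hi * (x ⬝ᵥ x))) := by
        gcongr; exact hP.isHermitian.dotProduct_mulVec_le_iSup_eigenvalues_mul x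
    _ = (Real.sqrt (hi / lo) * Real.sqrt (1 - η) ^ k) ^ 2 * (x ⬝ᵥ x) := by
        rw [mul_pow, Real.sq_sqrt (div_nonneg hhi hlo), ← pow_mul, mul_comm k, pow_mul,
          Real.sq_sqrt h1η]
        ring

theorem lyapunov_decay_bound {n : ℕ} (P M : Matrix (Fin n) (Fin n) ℝ) (η : ℝ)
    (hP : P.PosDef) (hη : 0 < η) (hη1 : η ≤ 1)
    (hM : ((1 - η) • P - Mᵀ * P * M).PosSemidef) :
    ∀ k : ℕ, spec (M ^ k) ≤
      Real.sqrt ((⨆ i, hP.isHermitian.eigenvalues i) / (⨅ i, hP.isHermitian.eigenvalues i)) *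
        Real.sqrt (1 - η) ^ k :=
  lyapunov_decay_bound_general P M η hP hη1 hM
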